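/- arXiv:1109.4863 — 4 statements merged into one kernel-verified Lean document; each statement's English description precedes it below -/
import Mathlib

section
/- Let n ≥ 1 and let G = K_1 + (2n+1)K_{2n+1} be the graph obtained from 2n+1 disjoint copies of the complete graph K_{2n+1} by adding one new vertex joined to all other vertices. Then G contains an H_n-factor, yet taking S to be the singleton consisting of the added vertex, o(G−S) = 2n+1 > 2n|S|; hence the condition o(G−S) ≤ 2n|S| for all S is not necessary for the existence of an H_n-factor. -/
open SimpleGraph

/-- `F` is an `Hₙ`-factor of `G`: a spanning subgraph in which every vertex has
degree in `{1, 3, 5, …, 2n-1, 2n}`. -/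
def IsHnFactor (n : ℕ) {V : Type*} (G F : SimpleGraph V) : Prop :=
  F ≤ G ∧ ∀ v : V,
    (Odd ((F.neighborSet v).ncard) ∧ (F.neighborSet v).ncard ≤ 2 * n - 1) ∨
      (F.neighborSet v).ncard = 2 * n

/-- The number of odd components (connected components of odd order) of a graph. -/
noncomputable def oddComponentCount {V : Type*} (G : SimpleGraph V) : ℕ :=
  Nat.card {c : G.ConnectedComponent // Odd (Nat.card c.supp)}

/-- Vertex set of `K₁ + (2n+1)K_{2n+1}`: one extra vertex (`none`) together with
`2n+1` copies of a `(2n+1)`-element set. -/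
abbrev JoinV (n : ℕ) := Option (Fin (2 * n + 1) × Fin (2 * n + 1))

/-- The graph `K₁ + (2n+1)K_{2n+1}`: the extra vertex `none` is adjacent to every
other vertex, and two vertices of the copies are adjacent iff they are distinct
vertices of the same copy. -/
def JoinG (n : ℕ) : SimpleGraph (JoinV n) :=
  SimpleGraph.fromRel (fun a b => a = none ∨
    ∃ (i : Fin (2 * n + 1)) (x y : Fin (2 * n + 1)), a = some (i, x) ∧ b = some (i, y))

namespace Stmt2Aux

variable (n : ℕ)

def rF (a b : JoinV n) : Prop :=
  (a = none ∧ b = some (0, 0)) ∨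
    ∃ i x y : Fin (2 * n + 1), a = some (i, x) ∧ b = some (i, y) ∧ ¬(i = 0 ∧ x ≤ 1 ∧ y ≤ 1)

def FG : SimpleGraph (JoinV n) := SimpleGraph.fromRel (rF n)

lemma FG_le : FG n ≤ JoinG n := by
  intro a b hab
  simp only [FG, JoinG, SimpleGraph.fromRel_adj] at *
  refine ⟨hab.1, ?_⟩
  rcases hab.2 with (⟨h1, _⟩ | ⟨i, x, y, h1, h2, _⟩) | (⟨h1, _⟩ | ⟨i, x, y, h1, h2, _⟩)
  · exact Or.inl (Or.inl h1)
  · exact Or.inl (Or.inr ⟨i, x, y, h1, h2⟩)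
  · exact Or.inr (Or.inl h1)
  · exact Or.inr (Or.inr ⟨i, x, y, h1, h2⟩)

lemma some_mk_injective (i : Fin (2 * n + 1)) :
    Function.Injective (fun y : Fin (2 * n + 1) => (some (i, y) : JoinV n)) := by
  intro a b h
  simpa using h

variable {n}

lemma val_one (hn : 1 ≤ n) : ((1 : Fin (2 * n + 1)) : ℕ) = 1 := by
  rw [Fin.val_one']
  exact Nat.mod_eq_of_lt (by omega)

lemma le_one_iff (hn : 1 ≤ n) (y : Fin (2 * n + 1)) : y ≤ 1 ↔ y = 0 ∨ y = 1 := by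
  rw [Fin.le_def]
  simp only [Fin.ext_iff, Fin.val_zero, val_one hn]
  omega

lemma zero_ne_one (hn : 1 ≤ n) : (0 : Fin (2 * n + 1)) ≠ 1 := by
  apply Fin.ne_of_val_ne
  rw [val_one hn, Fin.val_zero]
  omega

lemma ncard_ne (x : Fin (2 * n + 1)) : {y : Fin (2 * n + 1) | y ≠ x}.ncard = 2 * n := by
  have h : {y : Fin (2 * n + 1) | y ≠ x} = ({x} : Set (Fin (2 * n + 1)))ᶜ := by
    ext y; simp
  have h2 := Set.ncard_add_ncard_compl ({x} : Set (Fin (2 * n + 1)))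
  rw [Set.ncard_singleton, Nat.card_eq_fintype_card, Fintype.card_fin] at h2
  rw [h]; omega

lemma ncard_gt_one (hn : 1 ≤ n) : {y : Fin (2 * n + 1) | ¬ y ≤ 1}.ncard = 2 * n - 1 := by
  have h : {y : Fin (2 * n + 1) | ¬ y ≤ 1} = ({0, 1} : Set (Fin (2 * n + 1)))ᶜ := by
    ext y
    simp only [Set.mem_setOf_eq, Set.mem_compl_iff, Set.mem_insert_iff, Set.mem_singleton_iff]
    rw [le_one_iff hn]
  have h2 := Set.ncard_add_ncard_compl ({0, 1} : Set (Fin (2 * n + 1)))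
  rw [Set.ncard_pair (zero_ne_one hn), Nat.card_eq_fintype_card, Fintype.card_fin] at h2
  rw [h]; omega

lemma nbhd_none : (FG n).neighborSet none = {some ((0 : Fin (2*n+1)), (0 : Fin (2*n+1)))} := by
  ext w
  simp only [SimpleGraph.mem_neighborSet, FG, SimpleGraph.fromRel_adj, rF, Set.mem_singleton_iff]
  constructor
  · rintro ⟨hne, (⟨-, h⟩ | ⟨i, x, y, h, -, -⟩) | (⟨h, -⟩ | ⟨i, x, y, -, h, -⟩)⟩
    · exact h
    · exact absurd h.symm (by simp)
    · exact absurd h hne.symm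
    · exact absurd h (by simp)
  · rintro rfl
    exact ⟨by simp, Or.inl (Or.inl (by simp))⟩

lemma nbhd_some (i x : Fin (2 * n + 1)) :
    (FG n).neighborSet (some (i, x)) =
      (if i = 0 ∧ x = 0 then {(none : JoinV n)} else ∅) ∪
        (fun y : Fin (2 * n + 1) => (some (i, y) : JoinV n)) ''
          {y | y ≠ x ∧ ¬(i = 0 ∧ x ≤ 1 ∧ y ≤ 1)} := by
  ext w
  simp only [SimpleGraph.mem_neighborSet, FG, SimpleGraph.fromRel_adj, rF, Set.mem_union,
    Set.mem_image, Set.mem_setOf_eq]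
  constructor
  · rintro ⟨hne, (⟨h1, -⟩ | ⟨j, a, b, h1, h2, h3⟩) | (⟨h1, h2⟩ | ⟨j, a, b, h1, h2, h3⟩)⟩
    · exact absurd h1 (by simp)
    · simp only [Option.some.injEq, Prod.mk.injEq] at h1
      obtain ⟨rfl, rfl⟩ := h1
      exact Or.inr ⟨b, ⟨fun hbx => hne (by rw [h2, hbx]), h3⟩, h2.symm⟩
    · simp only [Option.some.injEq, Prod.mk.injEq] at h2
      obtain ⟨rfl, rfl⟩ := h2
      exact Or.inl (by simp [h1])
    · simp only [Option.some.injEq, Prod.mk.injEq] at h2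
      obtain ⟨rfl, rfl⟩ := h2
      refine Or.inr ⟨a, ⟨fun hax => hne (by rw [h1, hax]),
        fun hc => h3 ⟨hc.1, hc.2.2, hc.2.1⟩⟩, h1.symm⟩
  · rintro (h | ⟨y, ⟨hyx, hcond⟩, rfl⟩)
    · split_ifs at h with hc
      · obtain ⟨rfl, rfl⟩ := hc
        simp only [Set.mem_singleton_iff] at h
        subst h
        exact ⟨by simp, Or.inr (Or.inl ⟨rfl, rfl⟩)⟩
      · exact absurd h (Set.notMem_empty _)
    · exact ⟨by simp [Ne.symm hyx], Or.inl (Or.inr ⟨i, x, y, rfl, rfl, hcond⟩)⟩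

lemma degrees (hn : 1 ≤ n) (v : JoinV n) :
    (Odd (((FG n).neighborSet v).ncard) ∧ ((FG n).neighborSet v).ncard ≤ 2 * n - 1) ∨
      ((FG n).neighborSet v).ncard = 2 * n := by
  rcases v with _ | ⟨i, x⟩
  · left
    rw [nbhd_none, Set.ncard_singleton]
    exact ⟨odd_one, by omega⟩
  · rw [nbhd_some]
    by_cases hi : i = 0
    · subst hi
      by_cases hx0 : x = 0
      · subst hx0
        right
        have hset : {y : Fin (2*n+1) | y ≠ 0 ∧ ¬((0:Fin (2*n+1)) = 0 ∧ (0:Fin (2*n+1)) ≤ 1 ∧ y ≤ 1)}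
            = {y : Fin (2*n+1) | ¬ y ≤ 1} := by
          ext y
          constructor
          · rintro ⟨hy0, h⟩ hy1
            exact h ⟨rfl, Fin.zero_le _, hy1⟩
          · intro h
            exact ⟨fun hy => h (by rw [hy]; exact Fin.zero_le _), fun hc => h hc.2.2⟩
        have hdisj : Disjoint {(none : JoinV n)}
            ((fun y : Fin (2 * n + 1) => (some ((0:Fin (2*n+1)), y) : JoinV n)) ''
              {y : Fin (2*n+1) | ¬ y ≤ 1}) := by
          simp only [Set.disjoint_singleton_left, Set.mem_image]
          rintro ⟨y, -, h⟩
          exact absurd h (by simp)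
        have hc : (0 : Fin (2*n+1)) = 0 ∧ (0 : Fin (2*n+1)) = 0 := ⟨rfl, rfl⟩
        rw [if_pos hc, hset,
          Set.ncard_union_eq hdisj (Set.toFinite _) (Set.toFinite _),
          Set.ncard_singleton, Set.ncard_image_of_injective _ (some_mk_injective n 0),
          ncard_gt_one hn]
        omega
      · by_cases hx1 : x ≤ 1
        · have hx : x = 1 := by
            rcases (le_one_iff hn x).1 hx1 with h | h
            · exact absurd h hx0
            · exact h
          subst hx
          left
          have hset : {y : Fin (2*n+1) | y ≠ 1 ∧ ¬((0:Fin (2*n+1)) = 0 ∧ (1:Fin (2*n+1)) ≤ 1 ∧ y ≤ 1)}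
              = {y : Fin (2*n+1) | ¬ y ≤ 1} := by
            ext y
            constructor
            · rintro ⟨hy1, h⟩ hy
              exact h ⟨rfl, le_rfl, hy⟩
            · intro h
              exact ⟨fun hy => h (by rw [hy]), fun hc => h hc.2.2⟩
          rw [if_neg (by rintro ⟨-, h⟩; exact (zero_ne_one hn) h.symm), hset, Set.empty_union,
            Set.ncard_image_of_injective _ (some_mk_injective n 0), ncard_gt_one hn]
          exact ⟨⟨n - 1, by omega⟩, le_rfl⟩
        · right
          have hset : {y : Fin (2*n+1) | y ≠ x ∧ ¬((0:Fin (2*n+1)) = 0 ∧ x ≤ 1 ∧ y ≤ 1)}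
              = {y : Fin (2*n+1) | y ≠ x} := by
            ext y
            exact ⟨fun h => h.1, fun h => ⟨h, fun hc => hx1 hc.2.1⟩⟩
          rw [if_neg (by rintro ⟨-, h⟩; exact hx0 h), hset, Set.empty_union,
            Set.ncard_image_of_injective _ (some_mk_injective n 0), ncard_ne]
    · right
      have hset : {y : Fin (2*n+1) | y ≠ x ∧ ¬(i = 0 ∧ x ≤ 1 ∧ y ≤ 1)}
          = {y : Fin (2*n+1) | y ≠ x} := by
        ext y
        exact ⟨fun h => h.1, fun h => ⟨h, fun hc => hi hc.1⟩⟩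
      rw [if_neg (by rintro ⟨h, -⟩; exact hi h), hset, Set.empty_union,
        Set.ncard_image_of_injective _ (some_mk_injective n i), ncard_ne]

/-! #### The induced graph -/

abbrev V' (n : ℕ) := ↥(({(none : JoinV n)} : Set (JoinV n))ᶜ)

abbrev HG (n : ℕ) : SimpleGraph (V' n) :=
  (JoinG n).induce ({(none : JoinV n)} : Set (JoinV n))ᶜ

lemma ne_none (v : V' n) : v.1 ≠ none :=
  Set.mem_compl_singleton_iff.1 v.2

def idx (v : V' n) : Fin (2 * n + 1) × Fin (2 * n + 1) :=
  v.1.get (Option.ne_none_iff_isSome.1 (ne_none v))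

lemma some_idx (v : V' n) : v.1 = some (idx v) := by
  simp [idx]

lemma joinG_adj_some (p q : Fin (2*n+1) × Fin (2*n+1)) :
    (JoinG n).Adj (some p) (some q) ↔ p ≠ q ∧ p.1 = q.1 := by
  obtain ⟨p1, p2⟩ := p
  obtain ⟨q1, q2⟩ := q
  simp only [JoinG, SimpleGraph.fromRel_adj]
  constructor
  · rintro ⟨hne, (h | ⟨i, a, b, h1, h2⟩) | (h | ⟨i, a, b, h1, h2⟩)⟩
    · exact absurd h (by simp)
    · simp only [Option.some.injEq, Prod.mk.injEq] at h1 h2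
      exact ⟨fun h => hne (by rw [h]), h1.1.trans h2.1.symm⟩
    · exact absurd h (by simp)
    · simp only [Option.some.injEq, Prod.mk.injEq] at h1 h2
      exact ⟨fun h => hne (by rw [h]), h2.1.trans h1.1.symm⟩
  · rintro ⟨hne, h⟩
    have h' : p1 = q1 := h
    subst h'
    exact ⟨fun h => hne (Option.some.inj h), Or.inl (Or.inr ⟨p1, p2, q2, rfl, rfl⟩)⟩

lemma HG_adj (v w : V' n) : (HG n).Adj v w ↔ v ≠ w ∧ (idx v).1 = (idx w).1 := by
  have h : (HG n).Adj v w ↔ (JoinG n).Adj v.1 w.1 := Iff.rfl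
  rw [h, some_idx v, some_idx w, joinG_adj_some]
  constructor
  · rintro ⟨h1, h2⟩
    refine ⟨fun h => h1 ?_, h2⟩
    subst h; rfl
  · rintro ⟨h1, h2⟩
    refine ⟨fun h => h1 ?_, h2⟩
    apply Subtype.ext
    rw [some_idx v, some_idx w, h]

lemma reachable_iff (v w : V' n) : (HG n).Reachable v w ↔ (idx v).1 = (idx w).1 := by
  constructor
  · intro h
    obtain ⟨p⟩ := h
    induction p with
    | nil => rfl
    | cons hadj p ih => exact (((HG_adj _ _).1 hadj).2).trans ih
  · intro h
    by_cases hvw : v = w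
    · subst hvw; exact SimpleGraph.Reachable.refl v
    · exact ((HG_adj v w).2 ⟨hvw, h⟩).reachable

noncomputable def Φ : (HG n).ConnectedComponent → Fin (2 * n + 1) :=
  SimpleGraph.ConnectedComponent.lift (fun v => (idx v).1)
    (fun v w p _ => ((reachable_iff v w).1 ⟨p⟩))

lemma Φ_bij : Function.Bijective (Φ (n := n)) := by
  constructor
  · refine SimpleGraph.ConnectedComponent.ind₂ (fun v w h => ?_)
    have h' : (idx v).1 = (idx w).1 := h
    exact SimpleGraph.ConnectedComponent.sound ((reachable_iff v w).2 h')
  · intro i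
    exact ⟨(HG n).connectedComponentMk ⟨some (i, 0), by simp⟩, rfl⟩

lemma supp_card (c : (HG n).ConnectedComponent) : Nat.card c.supp = 2 * n + 1 := by
  refine SimpleGraph.ConnectedComponent.ind (fun v => ?_) c
  have hsupp : ((HG n).connectedComponentMk v).supp = {w : V' n | (idx w).1 = (idx v).1} := by
    ext w
    rw [SimpleGraph.ConnectedComponent.mem_supp_iff, SimpleGraph.ConnectedComponent.eq,
      Set.mem_setOf_eq, reachable_iff]
  rw [hsupp]
  have e : {w : V' n | (idx w).1 = (idx v).1} ≃ Fin (2 * n + 1) :=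
    { toFun := fun w => (idx w.1).2
      invFun := fun y => ⟨⟨some ((idx v).1, y), by simp⟩, rfl⟩
      left_inv := by
        rintro ⟨w, hw⟩
        apply Subtype.ext
        apply Subtype.ext
        show some ((idx v).1, (idx w).2) = w.1
        rw [some_idx w]
        exact congrArg some (Prod.ext_iff.2 ⟨hw.symm, rfl⟩)
      right_inv := fun y => rfl }
  rw [Nat.card_congr e, Nat.card_eq_fintype_card, Fintype.card_fin]

end Stmt2Aux

theorem stmt_2 (n : ℕ) (hn : 1 ≤ n) :
    (∃ F, IsHnFactor n (JoinG n) F) ∧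
    oddComponentCount ((JoinG n).induce ({(none : JoinV n)} : Set (JoinV n))ᶜ) = 2 * n + 1 ∧
    2 * n + 1 > 2 * n * ({(none : JoinV n)} : Set (JoinV n)).ncard := by
  refine ⟨⟨Stmt2Aux.FG n, Stmt2Aux.FG_le n, fun v => Stmt2Aux.degrees hn v⟩, ?_, ?_⟩
  · rw [oddComponentCount]
    have hodd : ∀ c : (Stmt2Aux.HG n).ConnectedComponent, Odd (Nat.card c.supp) := by
      intro c
      rw [Stmt2Aux.supp_card c]
      exact ⟨n, by omega⟩
    have e1 : {c : (Stmt2Aux.HG n).ConnectedComponent // Odd (Nat.card c.supp)}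
        ≃ (Stmt2Aux.HG n).ConnectedComponent := Equiv.subtypeUnivEquiv hodd
    rw [Nat.card_congr e1, Nat.card_congr (Equiv.ofBijective _ (Stmt2Aux.Φ_bij (n := n))),
      Nat.card_eq_fintype_card, Fintype.card_fin]
  · rw [Set.ncard_singleton]
    omega
end

section
/- Let n, k ≥ 1 be integers with k odd, and let G = K_k + (2nk+1)K_1 be the graph consisting of a clique on k vertices u_1,…,u_k each joined to 2nk+1 independent vertices v_1,…,v_{2nk+1} (no edges among the v_i). Then G contains no H_n-factor. -/
open SimpleGraph

/-- The graph `K_k + (2nk+1)K₁`: a clique on `k` vertices (the left summands),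
each joined to `2nk+1` independent vertices (the right summands). -/
def CliquePlusInd (n k : ℕ) : SimpleGraph (Fin k ⊕ Fin (2 * n * k + 1)) :=
  SimpleGraph.fromRel (fun a b => a.isLeft)

/-!
Every independent vertex `v_j` has a neighbour in an `Hₙ`-factor, necessarily in the clique, while
every clique vertex has at most `2n` neighbours there. Counting the factor's edges between the
two sides gives `2nk + 1 ≤ 2nk`.
-/

namespace IsHnFactor

variable {n : ℕ} {V : Type*} {G F : SimpleGraph V}

theorem ncard_neighborSet_le (hF : IsHnFactor n G F) (v : V) :
    (F.neighborSet v).ncard ≤ 2 * n := by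
  rcases hF.2 v with ⟨-, h⟩ | h <;> omega

theorem neighborSet_nonempty (hn : 0 < n) (hF : IsHnFactor n G F) (v : V) :
    (F.neighborSet v).Nonempty := by
  refine Set.nonempty_of_ncard_ne_zero ?_
  rcases hF.2 v with ⟨hodd, -⟩ | h
  · exact hodd.pos.ne'
  · omega

end IsHnFactor

theorem cliquePlusInd_not_adj_inr_inr {n k : ℕ} (i j : Fin (2 * n * k + 1)) :
    ¬ (CliquePlusInd n k).Adj (Sum.inr i) (Sum.inr j) := by
  simp [CliquePlusInd]

theorem SimpleGraph.card_right_le_card_left_mul {α β : Type*} [Fintype α] [Fintype β]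
    (F : SimpleGraph (α ⊕ β)) (d : ℕ) (hind : ∀ b b', ¬ F.Adj (Sum.inr b) (Sum.inr b'))
    (hne : ∀ b, (F.neighborSet (Sum.inr b)).Nonempty)
    (hdeg : ∀ a, (F.neighborSet (Sum.inl a)).ncard ≤ d) :
    Fintype.card β ≤ Fintype.card α * d := by
  classical
  let r : β → α → Prop := fun b a => F.Adj (Sum.inr b) (Sum.inl a)
  have hbelow : ∀ a, (Finset.univ.bipartiteBelow r a).card ≤ d := fun a => by
    rw [← Set.ncard_coe_finset, Finset.coe_bipartiteBelow]
    refine le_trans (Set.ncard_le_ncard_of_injOn Sum.inr ?_ Sum.inr_injective.injOn) (hdeg a)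
    exact fun b hb => F.adj_symm hb.2
  have habove : ∀ b, 1 ≤ (Finset.univ.bipartiteAbove r b).card := fun b => by
    obtain ⟨w, hw⟩ := hne b
    rcases w with a | b'
    · exact Finset.card_pos.mpr ⟨a, by simpa [Finset.bipartiteAbove, r] using hw⟩
    · exact absurd hw (hind b b')
  simpa using Finset.card_mul_le_card_mul r (fun b _ => habove b) (fun a _ => hbelow a)

theorem stmt_5_general (n k : ℕ) (hn : 1 ≤ n) :
    ¬ ∃ F, IsHnFactor n (CliquePlusInd n k) F := by
  rintro ⟨F, hF⟩
  have hcount := F.card_right_le_card_left_mul (2 * n)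
    (fun i j hadj => cliquePlusInd_not_adj_inr_inr i j (hF.1 hadj))
    (fun j => hF.neighborSet_nonempty hn _) (fun i => hF.ncard_neighborSet_le _)
  simp only [Fintype.card_fin] at hcount
  linarith [mul_comm k (2 * n)]

theorem stmt_5 (n k : ℕ) (hn : 1 ≤ n) (hk : 1 ≤ k) (hkodd : Odd k) :
    ¬ ∃ F, IsHnFactor n (CliquePlusInd n k) F :=
  stmt_5_general n k hn
end

section
/- Let n, k ≥ 1 be integers and let G = K_k + (2nk+1)K_1 as above. For any two non-adjacent vertices u = v_i and v = v_j (two of the independent vertices), the graph G + uv obtained by adding the edge uv contains an H_n-factor. -/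
open SimpleGraph

set_option maxHeartbeats 1000000 in
theorem stmt_6 (n k : ℕ) (hn : 1 ≤ n) (hk : 1 ≤ k)
    (i j : Fin (2 * n * k + 1)) (hij : i ≠ j) :
    ∃ F, IsHnFactor n
      (CliquePlusInd n k ⊔ SimpleGraph.fromEdgeSet {s(Sum.inr i, Sum.inr j)}) F := by
  classical
  have hpos : 0 < 2 * n := by omega
  -- distinguished last two indices
  set a : Fin (2 * n * k + 1) := ⟨2 * n * k - 1, by omega⟩ with ha
  set b : Fin (2 * n * k + 1) := ⟨2 * n * k, by omega⟩ with hb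
  have hab : a ≠ b := by
    simp only [ha, hb, Fin.mk.injEq, ne_eq]
    omega
  -- a permutation sending i ↦ a, j ↦ b
  obtain ⟨σ, hσi, hσj⟩ :
      ∃ σ : Equiv.Perm (Fin (2 * n * k + 1)), σ i = a ∧ σ j = b := by
    refine ⟨(Equiv.swap i a).trans (Equiv.swap ((Equiv.swap i a) j) b), ?_, ?_⟩
    · have h1 : (Equiv.swap i a) i = a := Equiv.swap_apply_left i a
      have h2 : (Equiv.swap i a) j ≠ a := by
        intro h
        have := (Equiv.swap i a).injective (h.trans h1.symm)
        exact hij this.symm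
      simp only [Equiv.trans_apply, h1]
      exact Equiv.swap_apply_of_ne_of_ne (fun h => h2 h.symm) hab
    · simp only [Equiv.trans_apply]
      exact Equiv.swap_apply_left _ _
  -- the matching function
  set f : Fin (2 * n * k + 1) → Fin k :=
    fun v => ⟨(σ v).val / (2 * n) % k, Nat.mod_lt _ hk⟩ with hf
  -- the factor
  set r : (Fin k ⊕ Fin (2 * n * k + 1)) → (Fin k ⊕ Fin (2 * n * k + 1)) → Prop :=
    fun x y => (∃ v, v ≠ i ∧ v ≠ j ∧ x = Sum.inl (f v) ∧ y = Sum.inr v) ∨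
      (x = Sum.inr i ∧ y = Sum.inr j) with hr
  set F : SimpleGraph (Fin k ⊕ Fin (2 * n * k + 1)) := SimpleGraph.fromRel r with hF
  refine ⟨F, ?_, ?_⟩
  · -- F ≤ G + e
    intro x y hxy
    rw [hF, SimpleGraph.fromRel_adj] at hxy
    obtain ⟨hne, h | h⟩ := hxy
    · rcases h with ⟨v, -, -, rfl, rfl⟩ | ⟨rfl, rfl⟩
      · left
        rw [CliquePlusInd, SimpleGraph.fromRel_adj]
        exact ⟨hne, by simp⟩
      · right
        simp only [SimpleGraph.fromEdgeSet_adj, Set.mem_singleton_iff]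
        exact ⟨by simp, hne⟩
    · rcases h with ⟨v, -, -, rfl, rfl⟩ | ⟨rfl, rfl⟩
      · left
        rw [CliquePlusInd, SimpleGraph.fromRel_adj]
        exact ⟨hne, by simp⟩
      · right
        simp only [SimpleGraph.fromEdgeSet_adj, Set.mem_singleton_iff]
        exact ⟨by simp [Sym2.eq_swap], hne⟩
  · -- degree conditions
    intro x
    match x with
    | Sum.inr v =>
      by_cases hvi : v = i
      · rw [hvi]
        have hns : F.neighborSet (Sum.inr i) = {Sum.inr j} := by
          ext y
          simp only [SimpleGraph.mem_neighborSet, Set.mem_singleton_iff]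
          rw [hF, SimpleGraph.fromRel_adj, hr]
          constructor
          · rintro ⟨hne, h | h⟩
            · rcases h with ⟨w, hw1, hw2, h1, h2⟩ | ⟨h1, h2⟩
              · simp at h1
              · exact h2
            · rcases h with ⟨w, hw1, hw2, h1, h2⟩ | ⟨h1, h2⟩
              · exact absurd (Sum.inr.inj h2).symm hw1
              · exact absurd (Sum.inr.inj h2) hij
          · rintro rfl
            exact ⟨by simpa using hij, Or.inl (Or.inr ⟨rfl, rfl⟩)⟩
        left
        rw [hns, Set.ncard_singleton]
        exact ⟨odd_one, by omega⟩
      · by_cases hvj : v = j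
        · rw [hvj]
          have hns : F.neighborSet (Sum.inr j) = {Sum.inr i} := by
            ext y
            simp only [SimpleGraph.mem_neighborSet, Set.mem_singleton_iff]
            rw [hF, SimpleGraph.fromRel_adj, hr]
            constructor
            · rintro ⟨hne, h | h⟩
              · rcases h with ⟨w, hw1, hw2, h1, h2⟩ | ⟨h1, h2⟩
                · simp at h1
                · exact absurd (Sum.inr.inj h1) hij.symm
              · rcases h with ⟨w, hw1, hw2, h1, h2⟩ | ⟨h1, h2⟩
                · exact absurd (Sum.inr.inj h2).symm hw2
                · exact h1
            · rintro rfl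
              exact ⟨by simpa using hij.symm, Or.inr (Or.inr ⟨rfl, rfl⟩)⟩
          left
          rw [hns, Set.ncard_singleton]
          exact ⟨odd_one, by omega⟩
        · have hns : F.neighborSet (Sum.inr v) = {Sum.inl (f v)} := by
            ext y
            simp only [SimpleGraph.mem_neighborSet, Set.mem_singleton_iff]
            rw [hF, SimpleGraph.fromRel_adj, hr]
            constructor
            · rintro ⟨hne, h | h⟩
              · rcases h with ⟨w, hw1, hw2, h1, h2⟩ | ⟨h1, h2⟩
                · simp at h1
                · exact absurd (Sum.inr.inj h1) hvi
              · rcases h with ⟨w, hw1, hw2, h1, h2⟩ | ⟨h1, h2⟩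
                · obtain rfl : w = v := Sum.inr.inj h2.symm
                  exact h1
                · exact absurd (Sum.inr.inj h2) hvj
            · rintro rfl
              exact ⟨by simp, Or.inr (Or.inl ⟨v, hvi, hvj, rfl, rfl⟩)⟩
          left
          rw [hns, Set.ncard_singleton]
          exact ⟨odd_one, by omega⟩
    | Sum.inl t =>
      have hns : F.neighborSet (Sum.inl t) =
          (((Finset.univ.filter (fun v => v ≠ i ∧ v ≠ j ∧ f v = t)).image Sum.inr : Finset (Fin k ⊕ Fin (2 * n * k + 1))) : Set (Fin k ⊕ Fin (2 * n * k + 1))) := by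
        ext y
        simp only [SimpleGraph.mem_neighborSet, Finset.coe_image, Finset.coe_filter,
          Set.mem_image, Set.mem_setOf_eq, Finset.mem_univ, true_and]
        rw [hF, SimpleGraph.fromRel_adj, hr]
        constructor
        · rintro ⟨hne, h | h⟩
          · rcases h with ⟨w, hw1, hw2, h1, h2⟩ | ⟨h1, h2⟩
            · exact ⟨w, ⟨hw1, hw2, (Sum.inl.inj h1).symm⟩, h2.symm⟩
            · simp at h1
          · rcases h with ⟨w, hw1, hw2, h1, h2⟩ | ⟨h1, h2⟩
            · simp at h2
            · simp at h2
        · rintro ⟨w, ⟨hw1, hw2, hw3⟩, rfl⟩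
          exact ⟨by simp, Or.inl (Or.inl ⟨w, hw1, hw2, by rw [hw3], rfl⟩)⟩
      rw [hns, Set.ncard_coe_finset, Finset.card_image_of_injective _ Sum.inr_injective]
      -- count the fiber via σ
      have hcard : (Finset.univ.filter (fun v => v ≠ i ∧ v ≠ j ∧ f v = t)).card
          = (Finset.Ico (2 * n * t.val) (min (2 * n * t.val + 2 * n) (2 * n * k - 1))).card := by
        refine Finset.card_bij' (fun v _ => (σ v).val)
          (fun m hm => σ.symm ⟨m, by
            simp only [Finset.mem_Ico] at hm; omega⟩) ?_ ?_ ?_ ?_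
        · intro v hv
          simp only [Finset.mem_filter, Finset.mem_univ, true_and] at hv
          obtain ⟨hv1, hv2, hv3⟩ := hv
          have h1 : σ v ≠ a := fun h => hv1 (σ.injective (h.trans hσi.symm))
          have h2 : σ v ≠ b := fun h => hv2 (σ.injective (h.trans hσj.symm))
          have h1' : (σ v).val ≠ 2 * n * k - 1 := fun h => h1 (Fin.ext h)
          have h2' : (σ v).val ≠ 2 * n * k := fun h => h2 (Fin.ext h)
          have hlt : (σ v).val < 2 * n * k - 1 := by
            have := (σ v).isLt; omega
          have hq : (σ v).val / (2 * n) < k := by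
            rw [Nat.div_lt_iff_lt_mul hpos]
            have : k * (2 * n) = 2 * n * k := by ring
            omega
          have hfv : (σ v).val / (2 * n) = t.val := by
            have := congrArg Fin.val hv3
            simp only [hf] at this
            rwa [Nat.mod_eq_of_lt hq] at this
          have hlo : 2 * n * t.val ≤ (σ v).val := by
            calc 2 * n * t.val = (σ v).val / (2 * n) * (2 * n) := by rw [hfv]; ring
            _ ≤ (σ v).val := Nat.div_mul_le_self _ _
          have hhi : (σ v).val < 2 * n * t.val + 2 * n := by
            have h3 : (σ v).val / (2 * n) < t.val + 1 := by omega
            rw [Nat.div_lt_iff_lt_mul hpos] at h3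
            have : (t.val + 1) * (2 * n) = 2 * n * t.val + 2 * n := by ring
            omega
          simp only [Finset.mem_Ico]
          omega
        · intro m hm
          simp only [Finset.mem_Ico] at hm
          obtain ⟨hm1, hm2⟩ := hm
          have hmlt : m < 2 * n * k - 1 := by omega
          simp only [Finset.mem_filter, Finset.mem_univ, true_and]
          refine ⟨?_, ?_, ?_⟩
          · intro h
            have h1 := congrArg (fun z => (σ z).val) h
            simp only [Equiv.apply_symm_apply, hσi, ha] at h1
            omega
          · intro h
            have h1 := congrArg (fun z => (σ z).val) h
            simp only [Equiv.apply_symm_apply, hσj, hb] at h1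
            omega
          · apply Fin.ext
            simp only [hf, Equiv.apply_symm_apply]
            have hdiv : m / (2 * n) = t.val := by
              apply Nat.div_eq_of_lt_le
              · calc t.val * (2 * n) = 2 * n * t.val := by ring
                _ ≤ m := hm1
              · calc m < 2 * n * t.val + 2 * n := by omega
                _ = (t.val + 1) * (2 * n) := by ring
            rw [hdiv, Nat.mod_eq_of_lt t.isLt]
        · intro v hv
          exact σ.symm_apply_apply v
        · intro m hm
          simp only [Equiv.apply_symm_apply]
      rw [hcard, Nat.card_Ico]
      have hkk : 2 * n * (k - 1) + 2 * n = 2 * n * k := by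
        cases k with
        | zero => omega
        | succ m =>
          simp only [Nat.succ_sub_one]
          ring
      by_cases ht : t.val < k - 1
      · right
        have h2 : 2 * n * (t.val + 1) ≤ 2 * n * (k - 1) :=
          Nat.mul_le_mul_left _ (by omega)
        have h3 : 2 * n * (t.val + 1) = 2 * n * t.val + 2 * n := by ring
        omega
      · left
        have ht' : t.val = k - 1 := by have := t.isLt; omega
        have h4 : 2 * n * t.val = 2 * n * (k - 1) := by rw [ht']
        refine ⟨⟨n - 1, by omega⟩, by omega⟩
end

section
/- Let G be a graph with no odd components. If for every vertex v the graph G − v contains an H_n-factor, then G contains an H_n-factor. -/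
open SimpleGraph

namespace HnFactorProof

variable {V : Type*}

/-- degree as ncard of neighbor set -/
noncomputable def dd (F : SimpleGraph V) (v : V) : ℕ := (F.neighborSet v).ncard

def good (n x : ℕ) : Prop := (Odd x ∧ x ≤ 2 * n - 1) ∨ x = 2 * n

section Fin
variable [Fintype V]

lemma neighborSet_sup (K H : SimpleGraph V) (v : V) :
    (K ⊔ H).neighborSet v = K.neighborSet v ∪ H.neighborSet v := by
  ext y; simp [mem_neighborSet, sup_adj, Set.mem_union]

lemma neighborSet_sdiff (K H : SimpleGraph V) (v : V) :
    (K \ H).neighborSet v = K.neighborSet v \ H.neighborSet v := by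
  ext y; simp [mem_neighborSet, sdiff_adj, Set.mem_diff]

lemma neighborSet_edge_left {c u : V} (h : u ≠ c) :
    (edge c u).neighborSet c = {u} := by
  ext y
  rw [mem_neighborSet, edge_adj, Set.mem_singleton_iff]
  constructor
  · rintro ⟨⟨_, rfl⟩ | ⟨rfl, rfl⟩, hne⟩
    · rfl
    · exact absurd rfl hne
  · rintro rfl; exact ⟨Or.inl ⟨rfl, rfl⟩, h.symm⟩

lemma neighborSet_edge_other {c u w : V} (hc : w ≠ c) (hu : w ≠ u) :
    (edge c u).neighborSet w = ∅ := by
  ext y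
  rw [mem_neighborSet, edge_adj]
  simp only [Set.mem_empty_iff_false, iff_false]
  rintro ⟨⟨rfl, rfl⟩ | ⟨rfl, rfl⟩, hne⟩
  · exact hc rfl
  · exact hu rfl

lemma dd_sup_edge_left {K : SimpleGraph V} {c u : V} (hucn : u ≠ c) (hna : ¬ K.Adj c u) :
    dd (K ⊔ edge c u) c = dd K c + 1 := by
  unfold dd
  rw [neighborSet_sup, neighborSet_edge_left hucn]
  have h1 : u ∉ K.neighborSet c := hna
  rw [Set.union_singleton, Set.ncard_insert_of_notMem h1 (Set.toFinite _)]

lemma edge_swap (c u : V) : edge c u = edge u c := by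
  unfold SimpleGraph.edge
  rw [Sym2.eq_swap]

lemma dd_sup_edge_right {K : SimpleGraph V} {c u : V} (hucn : u ≠ c) (hna : ¬ K.Adj c u) :
    dd (K ⊔ edge c u) u = dd K u + 1 := by
  have h := dd_sup_edge_left (K := K) (c := u) (u := c) hucn.symm (fun hh => hna hh.symm)
  rwa [edge_swap u c] at h

lemma dd_sup_edge_other {K : SimpleGraph V} {c u w : V} (hc : w ≠ c) (hu : w ≠ u) :
    dd (K ⊔ edge c u) w = dd K w := by
  unfold dd
  rw [neighborSet_sup, neighborSet_edge_other hc hu, Set.union_empty]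

lemma dd_sdiff_edge_left {K : SimpleGraph V} {c u : V} (ha : K.Adj c u) :
    dd (K \ edge c u) c + 1 = dd K c := by
  unfold dd
  rw [neighborSet_sdiff, neighborSet_edge_left ha.ne']
  have h1 : u ∈ K.neighborSet c := ha
  exact Set.ncard_diff_singleton_add_one h1 (Set.toFinite _)

lemma dd_sdiff_edge_right {K : SimpleGraph V} {c u : V} (ha : K.Adj c u) :
    dd (K \ edge c u) u + 1 = dd K u := by
  have h := dd_sdiff_edge_left (K := K) (c := u) (u := c) ha.symm
  rwa [edge_swap u c] at h

lemma dd_sdiff_edge_other {K : SimpleGraph V} {c u w : V} (hc : w ≠ c) (hu : w ≠ u) :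
    dd (K \ edge c u) w = dd K w := by
  unfold dd
  rw [neighborSet_sdiff, neighborSet_edge_other hc hu, Set.diff_empty]

/-- the measure: size of symmetric difference of edge sets -/
noncomputable def mm (F' K : SimpleGraph V) : ℕ := (symmDiff K.edgeSet F'.edgeSet).ncard

lemma mm_sup_edge {F' K : SimpleGraph V} {c u : V} (hna : ¬ K.Adj c u) (ha : F'.Adj c u) :
    mm F' (K ⊔ edge c u) < mm F' K := by
  unfold mm
  have hcu : c ≠ u := ha.ne
  have hes : (K ⊔ edge c u).edgeSet = K.edgeSet ∪ {s(c, u)} := by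
    rw [edgeSet_sup, edge_edgeSet_of_ne hcu]
  rw [hes]
  have hmemF : s(c, u) ∈ F'.edgeSet := ha
  have hmemK : s(c, u) ∉ K.edgeSet := hna
  have hset : symmDiff (K.edgeSet ∪ {s(c, u)}) F'.edgeSet
      = symmDiff K.edgeSet F'.edgeSet \ {s(c, u)} := by
    rw [Set.symmDiff_def, Set.symmDiff_def]
    ext e
    by_cases he : e = s(c, u) <;>
      simp [he, hmemF, hmemK] <;> tauto
  rw [hset]
  have hmem : s(c, u) ∈ symmDiff K.edgeSet F'.edgeSet := by
    rw [Set.symmDiff_def]; right; exact ⟨hmemF, hmemK⟩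
  have := Set.ncard_diff_singleton_add_one hmem (Set.toFinite _)
  omega

lemma mm_sdiff_edge {F' K : SimpleGraph V} {c u : V} (ha : K.Adj c u) (hna : ¬ F'.Adj c u) :
    mm F' (K \ edge c u) < mm F' K := by
  unfold mm
  have hcu : c ≠ u := ha.ne
  have hes : (K \ edge c u).edgeSet = K.edgeSet \ {s(c, u)} := by
    rw [edgeSet_sdiff, edge_edgeSet_of_ne hcu]
  rw [hes]
  have hmemK : s(c, u) ∈ K.edgeSet := ha
  have hmemF : s(c, u) ∉ F'.edgeSet := hna
  have hset : symmDiff (K.edgeSet \ {s(c, u)}) F'.edgeSet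
      = symmDiff K.edgeSet F'.edgeSet \ {s(c, u)} := by
    rw [Set.symmDiff_def, Set.symmDiff_def]
    ext e
    by_cases he : e = s(c, u) <;>
      simp [he, hmemF, hmemK] <;> tauto
  rw [hset]
  have hmem : s(c, u) ∈ symmDiff K.edgeSet F'.edgeSet := by
    rw [Set.symmDiff_def]; left; exact ⟨hmemK, hmemF⟩
  have := Set.ncard_diff_singleton_add_one hmem (Set.toFinite _)
  omega

lemma exists_up {F' K : SimpleGraph V} {c : V} (h : dd K c < dd F' c) :
    ∃ u, F'.Adj c u ∧ ¬ K.Adj c u := by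
  by_contra hc
  push_neg at hc
  have hsub : F'.neighborSet c ⊆ K.neighborSet c := fun u hu => hc u hu
  have := Set.ncard_le_ncard hsub (Set.toFinite _)
  unfold dd at h; omega

lemma exists_down {F' K : SimpleGraph V} {c : V} (h : dd F' c < dd K c) :
    ∃ u, K.Adj c u ∧ ¬ F'.Adj c u := by
  obtain ⟨u, h1, h2⟩ := exists_up (F' := K) (K := F') h
  exact ⟨u, h1, h2⟩

lemma edge_le_of_adj {F' : SimpleGraph V} {c u : V} (h : F'.Adj c u) : edge c u ≤ F' := by
  intro a b hab
  rw [edge_adj] at hab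
  rcases hab with ⟨⟨rfl, rfl⟩ | ⟨rfl, rfl⟩, _⟩
  · exact h
  · exact h.symm


/-- Conclusion of an "up" exchange step at `c`. -/
def UpC (F' K : SimpleGraph V) (c : V) : Prop :=
  ∃ K', K' ≤ K ⊔ F' ∧ mm F' K' < mm F' K ∧
    ((dd K' c = dd K c + 2 ∧ dd K' c ≤ dd F' c ∧ ∀ w, w ≠ c → dd K' w = dd K w) ∨
     (dd K' c = dd K c + 1 ∧ ∃ t, t ≠ c ∧ (∀ w, w ≠ c → w ≠ t → dd K' w = dd K w) ∧
       ((dd K' t = dd K t + 1 ∧ dd K t < dd F' t) ∨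
        (dd K' t + 1 = dd K t ∧ dd F' t < dd K t))))

/-- Conclusion of a "down" exchange step at `c`. -/
def DnC (F' K : SimpleGraph V) (c : V) : Prop :=
  ∃ K', K' ≤ K ⊔ F' ∧ mm F' K' < mm F' K ∧
    ((dd K' c + 2 = dd K c ∧ dd F' c ≤ dd K' c ∧ ∀ w, w ≠ c → dd K' w = dd K w) ∨
     (dd K' c + 1 = dd K c ∧ ∃ t, t ≠ c ∧ (∀ w, w ≠ c → w ≠ t → dd K' w = dd K w) ∧
       ((dd K' t = dd K t + 1 ∧ dd K t < dd F' t) ∨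
        (dd K' t + 1 = dd K t ∧ dd F' t < dd K t))))

lemma master (F' : SimpleGraph V) :
    ∀ M : ℕ, ∀ K : SimpleGraph V, mm F' K < M → ∀ c : V,
      (dd K c < dd F' c → UpC F' K c) ∧ (dd F' c < dd K c → DnC F' K c) := by
  intro M
  induction M with
  | zero => intro K hK; omega
  | succ M ih =>
    intro K hK c
    constructor
    · -- UP
      intro hc
      obtain ⟨u, ha', hna⟩ := exists_up hc
      have huc : u ≠ c := ha'.ne'
      set K₁ := K ⊔ edge c u with hK₁def
      have hd1c : dd K₁ c = dd K c + 1 := dd_sup_edge_left huc hna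
      have hd1u : dd K₁ u = dd K u + 1 := dd_sup_edge_right huc hna
      have hd1o : ∀ w, w ≠ c → w ≠ u → dd K₁ w = dd K w := fun w h1 h2 =>
        dd_sup_edge_other h1 h2
      have hm1 : mm F' K₁ < mm F' K := mm_sup_edge hna ha'
      have hle1 : K₁ ≤ K ⊔ F' := sup_le le_sup_left (le_trans (edge_le_of_adj ha') le_sup_right)
      by_cases hu2 : dd K u < dd F' u
      · exact ⟨K₁, hle1, hm1, Or.inr ⟨hd1c, u, huc, fun w h1 h2 => hd1o w h1 h2,
          Or.inl ⟨hd1u, hu2⟩⟩⟩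
      · have hgt : dd F' u < dd K₁ u := by omega
        obtain ⟨K₂, hle2, hm2, hcase⟩ := ((ih K₁ (by omega) u).2 hgt)
        have hle2' : K₂ ≤ K ⊔ F' := le_trans hle2 (sup_le hle1 le_sup_right)
        have hm2' : mm F' K₂ < mm F' K := lt_trans hm2 hm1
        rcases hcase with ⟨h2, hge, hoth⟩ | ⟨h1, t, htu, hoth, hmove⟩
        · -- (ii) down at u relative to K₁
          refine ⟨K₂, hle2', hm2', Or.inr ⟨?_, u, huc, ?_, Or.inr ⟨by omega, by omega⟩⟩⟩
          · rw [hoth c (Ne.symm huc), hd1c]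
          · intro w h1 h2
            rw [hoth w h2, hd1o w h1 h2]
        · -- (i) at u
          have hK2u : dd K₂ u = dd K u := by omega
          by_cases htc : t = c
          · subst htc
            rcases hmove with ⟨hup, hlt⟩ | ⟨hdn, hlt⟩
            · -- up at c rel K₁ : gives the +2 case
              refine ⟨K₂, hle2', hm2', Or.inl ⟨by omega, by omega, ?_⟩⟩
              intro w hwc
              by_cases hwu : w = u
              · subst hwu; omega
              · rw [hoth w hwu hwc, hd1o w hwc hwu]
            · -- down at c rel K₁ : impossible since dd K c < dd F' c
              exfalso; omega
          · -- t ∉ {c, u}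
            have hK1t : dd K₁ t = dd K t := hd1o t htc htu
            refine ⟨K₂, hle2', hm2', Or.inr ⟨?_, t, htc, ?_, ?_⟩⟩
            · rw [hoth c (Ne.symm huc) (fun hh => htc hh.symm), hd1c]
            · intro w h1 h2
              by_cases hwu : w = u
              · subst hwu; omega
              · rw [hoth w hwu h2, hd1o w h1 hwu]
            · rcases hmove with ⟨hA, hB⟩ | ⟨hA, hB⟩
              · exact Or.inl ⟨by omega, by omega⟩
              · exact Or.inr ⟨by omega, by omega⟩
    · -- DOWN
      intro hc
      obtain ⟨u, ha, hna'⟩ := exists_down hc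
      have huc : u ≠ c := ha.ne'
      set K₁ := K \ edge c u with hK₁def
      have hd1c : dd K₁ c + 1 = dd K c := dd_sdiff_edge_left ha
      have hd1u : dd K₁ u + 1 = dd K u := dd_sdiff_edge_right ha
      have hd1o : ∀ w, w ≠ c → w ≠ u → dd K₁ w = dd K w := fun w h1 h2 =>
        dd_sdiff_edge_other h1 h2
      have hm1 : mm F' K₁ < mm F' K := mm_sdiff_edge ha hna'
      have hle1 : K₁ ≤ K ⊔ F' := le_trans sdiff_le le_sup_left
      by_cases hu2 : dd F' u < dd K u
      · exact ⟨K₁, hle1, hm1, Or.inr ⟨hd1c, u, huc, fun w h1 h2 => hd1o w h1 h2,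
          Or.inr ⟨hd1u, hu2⟩⟩⟩
      · have hlt : dd K₁ u < dd F' u := by omega
        obtain ⟨K₂, hle2, hm2, hcase⟩ := ((ih K₁ (by omega) u).1 hlt)
        have hle2' : K₂ ≤ K ⊔ F' := le_trans hle2 (sup_le hle1 le_sup_right)
        have hm2' : mm F' K₂ < mm F' K := lt_trans hm2 hm1
        rcases hcase with ⟨h2, hge, hoth⟩ | ⟨h1, t, htu, hoth, hmove⟩
        · -- (ii) up at u relative to K₁
          refine ⟨K₂, hle2', hm2', Or.inr ⟨?_, u, huc, ?_, Or.inl ⟨by omega, by omega⟩⟩⟩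
          · rw [hoth c (Ne.symm huc)]; omega
          · intro w h1 h2
            rw [hoth w h2, hd1o w h1 h2]
        · -- (i) at u
          have hK2u : dd K₂ u = dd K u := by omega
          by_cases htc : t = c
          · subst htc
            rcases hmove with ⟨hup, hlt2⟩ | ⟨hdn, hlt2⟩
            · -- up at c rel K₁ : impossible since dd F' c < dd K c
              exfalso; omega
            · -- down at c rel K₁ : gives the -2 case
              refine ⟨K₂, hle2', hm2', Or.inl ⟨by omega, by omega, ?_⟩⟩
              intro w hwc
              by_cases hwu : w = u
              · subst hwu; omega
              · rw [hoth w hwu hwc, hd1o w hwc hwu]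
          · -- t ∉ {c, u}
            have hK1t : dd K₁ t = dd K t := hd1o t htc htu
            refine ⟨K₂, hle2', hm2', Or.inr ⟨?_, t, htc, ?_, ?_⟩⟩
            · rw [hoth c (Ne.symm huc) (fun hh => htc hh.symm)]; omega
            · intro w h1 h2
              by_cases hwu : w = u
              · subst hwu; omega
              · rw [hoth w hwu h2, hd1o w h1 hwu]
            · rcases hmove with ⟨hA, hB⟩ | ⟨hA, hB⟩
              · exact Or.inl ⟨by omega, by omega⟩
              · exact Or.inr ⟨by omega, by omega⟩



lemma good_le {n x : ℕ} (h : good n x) : x ≤ 2 * n := by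
  rcases h with ⟨-, h⟩ | h <;> omega

lemma dist_def (a b : ℕ) : Nat.dist a b = (a - b) + (b - a) := rfl

lemma scheme (n : ℕ) (hn : 1 ≤ n) (G F' : SimpleGraph V) (z : V)
    (hF' : F' ≤ G) (hz0 : dd F' z = 0) (hg' : ∀ w, w ≠ z → good n (dd F' w)) :
    ∀ μ : ℕ, ∀ F : SimpleGraph V, F ≤ G → dd F z = 2 * n →
      ∀ b, Even (dd F b) → dd F b ≤ 2 * n - 2 → (∀ w, w ≠ b → good n (dd F w)) →
      (∑ v, Nat.dist (dd F v) (dd F' v)) < μ →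
      ∃ K, K ≤ G ∧ ∀ v, good n (dd K v) := by
  intro μ
  induction μ with
  | zero => intro F _ _ b _ _ _ h; omega
  | succ μ ih =>
    intro F hFG hFz b hbev hble hgood hμ
    have hb2 : dd F b % 2 = 0 := Nat.even_iff.mp hbev
    have hbz : b ≠ z := by intro hh; subst hh; omega
    have hb' : good n (dd F' b) := hg' b hbz
    have hb'le : dd F' b ≤ 2 * n := good_le hb'
    have hbne : dd F b ≠ dd F' b := by
      rcases hb' with ⟨hbo, _⟩ | hbe
      · have := Nat.odd_iff.mp hbo; omega
      · omega
    rcases lt_or_gt_of_ne hbne with hlt | hgt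
    · -- UP at b
      obtain ⟨K', hle, -, hcase⟩ := (master F' (mm F' F + 1) F (Nat.lt_succ_self _) b).1 hlt
      have hK'G : K' ≤ G := hle.trans (sup_le hFG hF')
      rcases hcase with ⟨h2, h2le, hoth⟩ | ⟨h1, t, htb, hoth, hmove⟩
      · -- +2 case
        by_cases hdone : dd K' b = 2 * n
        · refine ⟨K', hK'G, fun v => ?_⟩
          by_cases hv : v = b
          · subst hv; exact Or.inr hdone
          · rw [hoth v hv]; exact hgood v hv
        · refine ih K' hK'G (by rw [hoth z (Ne.symm hbz)]; exact hFz) b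
            (Nat.even_iff.mpr (by omega)) (by omega)
            (fun w hw => by rw [hoth w hw]; exact hgood w hw) ?_
          have hstep : ∀ i ∈ Finset.univ,
              Nat.dist (dd K' i) (dd F' i) ≤ Nat.dist (dd F i) (dd F' i) := by
            intro i _
            by_cases hi : i = b
            · subst hi; rw [dist_def, dist_def]; omega
            · exact le_of_eq (by rw [hoth i hi])
          have hsum := Finset.sum_lt_sum hstep
            ⟨b, Finset.mem_univ b, by rw [dist_def, dist_def]; omega⟩
          omega
      · -- +1 case, second vertex t
        have hbgood : good n (dd K' b) :=
          Or.inl ⟨Nat.odd_iff.mpr (by omega), by omega⟩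
      -- analysis of t
        by_cases htz : t = z
        · subst htz
          rcases hmove with ⟨hA, hB⟩ | ⟨hA, hB⟩
          · rw [hz0] at hB; omega
          · refine ⟨K', hK'G, fun v => ?_⟩
            by_cases hv1 : v = b
            · subst hv1; exact hbgood
            · by_cases hv2 : v = t
              · subst hv2
                exact Or.inl ⟨Nat.odd_iff.mpr (by omega), by omega⟩
              · rw [hoth v hv1 hv2]; exact hgood v hv1
        · have htgood := hgood t htb
          have ht' : good n (dd F' t) := hg' t htz
          have ht'le : dd F' t ≤ 2 * n := good_le ht'
          by_cases hdone : good n (dd K' t)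
          · refine ⟨K', hK'G, fun v => ?_⟩
            by_cases hv1 : v = b
            · subst hv1; exact hbgood
            · by_cases hv2 : v = t
              · subst hv2; exact hdone
              · rw [hoth v hv1 hv2]; exact hgood v hv1
          · rcases htgood with ⟨hto, htl⟩ | hte
            · have hto2 := Nat.odd_iff.mp hto
              have htnew_ne : dd K' t ≠ 2 * n := fun hh => hdone (Or.inr hh)
              have htnew2 : dd K' t % 2 = 0 := by
                rcases hmove with ⟨hA, -⟩ | ⟨hA, -⟩ <;> omega
              have htle : dd K' t ≤ 2 * n - 2 := by
                rcases hmove with ⟨hA, hB⟩ | ⟨hA, hB⟩ <;> omega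
              refine ih K' hK'G
                (by rw [hoth z (Ne.symm hbz) (fun hh => htz hh.symm)]; exact hFz) t
                (Nat.even_iff.mpr htnew2) htle ?_ ?_
              · intro w hw
                by_cases hwb : w = b
                · subst hwb; exact hbgood
                · rw [hoth w hwb hw]; exact hgood w hwb
              · have hstep : ∀ i ∈ Finset.univ,
                    Nat.dist (dd K' i) (dd F' i) ≤ Nat.dist (dd F i) (dd F' i) := by
                  intro i _
                  by_cases hi1 : i = b
                  · subst hi1; rw [dist_def, dist_def]; omega
                  · by_cases hi2 : i = t
                    · subst hi2
                      rcases hmove with ⟨hA, hB⟩ | ⟨hA, hB⟩ <;>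
                        (rw [dist_def, dist_def]; omega)
                    · exact le_of_eq (by rw [hoth i hi1 hi2])
                have hsum := Finset.sum_lt_sum hstep
                  ⟨b, Finset.mem_univ b, by rw [dist_def, dist_def]; omega⟩
                omega
            · exfalso
              rcases hmove with ⟨hA, hB⟩ | ⟨hA, hB⟩
              · omega
              · exact hdone (Or.inl ⟨Nat.odd_iff.mpr (by omega), by omega⟩)
    · -- DOWN at b
      obtain ⟨K', hle, -, hcase⟩ := (master F' (mm F' F + 1) F (Nat.lt_succ_self _) b).2 hgt
      have hK'G : K' ≤ G := hle.trans (sup_le hFG hF')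
      rcases hcase with ⟨h2, h2ge, hoth⟩ | ⟨h1, t, htb, hoth, hmove⟩
      · -- -2 case
        by_cases hdone : dd K' b = 2 * n
        · refine ⟨K', hK'G, fun v => ?_⟩
          by_cases hv : v = b
          · subst hv; exact Or.inr hdone
          · rw [hoth v hv]; exact hgood v hv
        · refine ih K' hK'G (by rw [hoth z (Ne.symm hbz)]; exact hFz) b
            (Nat.even_iff.mpr (by omega)) (by omega)
            (fun w hw => by rw [hoth w hw]; exact hgood w hw) ?_
          have hstep : ∀ i ∈ Finset.univ,
              Nat.dist (dd K' i) (dd F' i) ≤ Nat.dist (dd F i) (dd F' i) := by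
            intro i _
            by_cases hi : i = b
            · subst hi; rw [dist_def, dist_def]; omega
            · exact le_of_eq (by rw [hoth i hi])
          have hsum := Finset.sum_lt_sum hstep
            ⟨b, Finset.mem_univ b, by rw [dist_def, dist_def]; omega⟩
          omega
      · -- -1 case, second vertex t
        have hbgood : good n (dd K' b) :=
          Or.inl ⟨Nat.odd_iff.mpr (by omega), by omega⟩
        by_cases htz : t = z
        · subst htz
          rcases hmove with ⟨hA, hB⟩ | ⟨hA, hB⟩
          · rw [hz0] at hB; omega
          · refine ⟨K', hK'G, fun v => ?_⟩
            by_cases hv1 : v = b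
            · subst hv1; exact hbgood
            · by_cases hv2 : v = t
              · subst hv2
                exact Or.inl ⟨Nat.odd_iff.mpr (by omega), by omega⟩
              · rw [hoth v hv1 hv2]; exact hgood v hv1
        · have htgood := hgood t htb
          have ht' : good n (dd F' t) := hg' t htz
          have ht'le : dd F' t ≤ 2 * n := good_le ht'
          by_cases hdone : good n (dd K' t)
          · refine ⟨K', hK'G, fun v => ?_⟩
            by_cases hv1 : v = b
            · subst hv1; exact hbgood
            · by_cases hv2 : v = t
              · subst hv2; exact hdone
              · rw [hoth v hv1 hv2]; exact hgood v hv1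
          · rcases htgood with ⟨hto, htl⟩ | hte
            · have hto2 := Nat.odd_iff.mp hto
              have htnew_ne : dd K' t ≠ 2 * n := fun hh => hdone (Or.inr hh)
              have htnew2 : dd K' t % 2 = 0 := by
                rcases hmove with ⟨hA, -⟩ | ⟨hA, -⟩ <;> omega
              have htle : dd K' t ≤ 2 * n - 2 := by
                rcases hmove with ⟨hA, hB⟩ | ⟨hA, hB⟩ <;> omega
              refine ih K' hK'G
                (by rw [hoth z (Ne.symm hbz) (fun hh => htz hh.symm)]; exact hFz) t
                (Nat.even_iff.mpr htnew2) htle ?_ ?_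
              · intro w hw
                by_cases hwb : w = b
                · subst hwb; exact hbgood
                · rw [hoth w hwb hw]; exact hgood w hwb
              · have hstep : ∀ i ∈ Finset.univ,
                    Nat.dist (dd K' i) (dd F' i) ≤ Nat.dist (dd F i) (dd F' i) := by
                  intro i _
                  by_cases hi1 : i = b
                  · subst hi1; rw [dist_def, dist_def]; omega
                  · by_cases hi2 : i = t
                    · subst hi2
                      rcases hmove with ⟨hA, hB⟩ | ⟨hA, hB⟩ <;>
                        (rw [dist_def, dist_def]; omega)
                    · exact le_of_eq (by rw [hoth i hi1 hi2])
                have hsum := Finset.sum_lt_sum hstep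
                  ⟨b, Finset.mem_univ b, by rw [dist_def, dist_def]; omega⟩
                omega
            · exfalso
              rcases hmove with ⟨hA, hB⟩ | ⟨hA, hB⟩
              · omega
              · exact hdone (Or.inl ⟨Nat.odd_iff.mpr (by omega), by omega⟩)



lemma transfer (n : ℕ) (G : SimpleGraph V) (v : V)
    (h : ∃ F, IsHnFactor n (G.induce ({v} : Set V)ᶜ) F) :
    ∃ F' : SimpleGraph V, F' ≤ G ∧ dd F' v = 0 ∧ ∀ w, w ≠ v → good n (dd F' w) := by
  obtain ⟨F, hFle, hFg⟩ := h
  refine ⟨F.map (Function.Embedding.subtype _), ?_, ?_, ?_⟩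
  · intro a b hab
    rw [SimpleGraph.map_adj] at hab
    obtain ⟨x, y, hxy, rfl, rfl⟩ := hab
    exact hFle hxy
  · have hempty : (F.map (Function.Embedding.subtype _)).neighborSet v = ∅ := by
      ext y
      simp only [mem_neighborSet, SimpleGraph.map_adj, Set.mem_empty_iff_false, iff_false]
      rintro ⟨x, y', hxy, hx, rfl⟩
      exact x.2 (by simpa using hx)
    unfold dd
    rw [hempty, Set.ncard_empty]
  · intro w hw
    have hwmem : w ∈ ({v} : Set V)ᶜ := by simpa using hw
    have hns : (F.map (Function.Embedding.subtype _)).neighborSet w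
        = (Function.Embedding.subtype _) '' (F.neighborSet ⟨w, hwmem⟩) := by
      ext y
      simp only [mem_neighborSet, SimpleGraph.map_adj, Set.mem_image]
      constructor
      · rintro ⟨x, y', hxy, hx, rfl⟩
        have hxw : x = ⟨w, hwmem⟩ := Subtype.ext hx
        subst hxw
        exact ⟨y', hxy, rfl⟩
      · rintro ⟨y', hy', rfl⟩
        exact ⟨⟨w, hwmem⟩, y', hy', rfl, rfl⟩
    have hcard : dd (F.map (Function.Embedding.subtype _)) w
        = (F.neighborSet ⟨w, hwmem⟩).ncard := by
      unfold dd
      rw [hns]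
      exact Set.ncard_image_of_injective _ (Subtype.val_injective)
    rw [hcard]
    exact hFg ⟨w, hwmem⟩

lemma card_even (G : SimpleGraph V)
    (hno : ∀ c : G.ConnectedComponent, ¬ Odd (Nat.card c.supp)) :
    Even (Fintype.card V) := by
  classical
  letI : Fintype G.ConnectedComponent := Fintype.ofFinite _
  have hpart : (Finset.univ : Finset V).card =
      ∑ c : G.ConnectedComponent,
        (Finset.univ.filter (fun x => G.connectedComponentMk x = c)).card :=
    Finset.card_eq_sum_card_fiberwise (fun x _ => Finset.mem_univ _)
  have hfib : ∀ c : G.ConnectedComponent,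
      (Finset.univ.filter (fun x => G.connectedComponentMk x = c)).card
        = Nat.card c.supp := by
    intro c
    have h1 : Nat.card c.supp = Nat.card {x // G.connectedComponentMk x = c} :=
      Nat.card_congr (Equiv.subtypeEquivRight (fun x => c.mem_supp_iff x))
    rw [h1, Nat.card_eq_fintype_card, Fintype.card_subtype]
  rw [← Finset.card_univ, hpart]
  apply Finset.even_sum
  intro c _
  rw [hfib c]
  exact Nat.not_odd_iff_even.mp (hno c)

lemma dd_eq_degree (F : SimpleGraph V) [DecidableRel F.Adj] (v : V) :
    dd F v = F.degree v := by
  unfold dd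
  rw [← Nat.card_coe_set_eq, Nat.card_eq_fintype_card,
    SimpleGraph.card_neighborSet_eq_degree]

lemma exists_z (n : ℕ) (hcard : Even (Fintype.card V)) (F : SimpleGraph V) (v₀ : V)
    (h0 : dd F v₀ = 0) (hg : ∀ w, w ≠ v₀ → good n (dd F w)) :
    ∃ z, z ≠ v₀ ∧ dd F z = 2 * n := by
  classical
  by_contra hc
  push_neg at hc
  have hodd : ∀ w, w ≠ v₀ → dd F w % 2 = 1 := by
    intro w hw
    rcases hg w hw with ⟨ho, -⟩ | he
    · exact Nat.odd_iff.mp ho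
    · exact absurd he (hc w hw)
  letI : DecidableRel F.Adj := Classical.decRel _
  have hsum := F.sum_degrees_eq_twice_card_edges
  have hsplit : ∑ x, F.degree x
      = F.degree v₀ + ∑ x ∈ Finset.univ.erase v₀, F.degree x :=
    (Finset.add_sum_erase _ _ (Finset.mem_univ v₀)).symm
  have hmod : (∑ x ∈ Finset.univ.erase v₀, F.degree x) % 2
      = (∑ _x ∈ Finset.univ.erase v₀, 1) % 2 := by
    rw [Finset.sum_nat_mod, Finset.sum_nat_mod _ _ (fun _ => 1)]
    congr 1
    apply Finset.sum_congr rfl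
    intro x hx
    have hxv : x ≠ v₀ := Finset.ne_of_mem_erase hx
    rw [← dd_eq_degree, hodd x hxv]
  have hcount : (∑ _x ∈ Finset.univ.erase v₀, 1) = Fintype.card V - 1 := by
    rw [Finset.sum_const, smul_eq_mul, mul_one, Finset.card_erase_of_mem (Finset.mem_univ _),
      Finset.card_univ]
  have hdeg0 : F.degree v₀ = 0 := by rw [← dd_eq_degree]; exact h0
  have hpos : 1 ≤ Fintype.card V := Fintype.card_pos_iff.mpr ⟨v₀⟩
  obtain ⟨m, hm⟩ := hcard
  omega

end Fin

end HnFactorProof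

theorem stmt_10 {V : Type*} [Fintype V] (n : ℕ) (hn : 1 ≤ n) (G : SimpleGraph V)
    (hno : ∀ c : G.ConnectedComponent, ¬ Odd (Nat.card c.supp))
    (h : ∀ v : V, ∃ F, IsHnFactor n (G.induce ({v} : Set V)ᶜ) F) :
    ∃ F, IsHnFactor n G F := by
  classical
  rcases isEmpty_or_nonempty V with hV | hV
  · exact ⟨⊥, bot_le, fun v => (IsEmpty.false v).elim⟩
  · obtain ⟨v₀⟩ := hV
    obtain ⟨F₀, hF₀G, hF₀0, hF₀g⟩ := HnFactorProof.transfer n G v₀ (h v₀)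
    have hcard := HnFactorProof.card_even G hno
    obtain ⟨z, hzv, hz2n⟩ := HnFactorProof.exists_z n hcard F₀ v₀ hF₀0 hF₀g
    obtain ⟨F', hF'G, hF'0, hF'g⟩ := HnFactorProof.transfer n G z (h z)
    obtain ⟨K, hKG, hKg⟩ := HnFactorProof.scheme n hn G F' z hF'G hF'0 hF'g
      ((∑ v, Nat.dist (HnFactorProof.dd F₀ v) (HnFactorProof.dd F' v)) + 1)
      F₀ hF₀G hz2n v₀ (by rw [hF₀0]; exact Even.zero)
      (by rw [hF₀0]; exact Nat.zero_le _) hF₀g (Nat.lt_succ_self _)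
    exact ⟨K, hKG, hKg⟩
end
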